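/- Let K be a number field with ring of integers 𝒪_K, let I ⊆ 𝒪_K be a nonzero ideal, and let n be the positive integer such that I ∩ ℤ = nℤ. Then 𝒪_K/I is a finite symmetric ℤ/n-algebra. -/

import Mathlib

/-!
By the Chinese remainder theorem `𝓞 K ⧸ I ≅ ∏ 𝓞 K ⧸ P ^ e` over the prime powers exactly
dividing `I`, and a sum of nondegenerate functionals on the factors is nondegenerate on the
product. The ideals of `𝓞 K ⧸ P ^ e` form the chain `P ^ k ⧸ P ^ e`, so every nonzero ideal
contains the minimal one, generated by some `t`; any character `𝓞 K ⧸ P ^ e →+ ZMod n` not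
vanishing at `t` is nondegenerate, and one exists because `𝓞 K ⧸ P ^ e` is a finite group
killed by `n`.
-/

open NumberField UniqueFactorizationMonoid

theorem ZMod.exists_addMonoidHom_injective_of_dvd {m n : ℕ} [NeZero n] (hmn : m ∣ n) :
    ∃ g : ZMod m →+ ZMod n, Function.Injective g := by
  obtain ⟨d, rfl⟩ := hmn
  have hd : d ≠ 0 := right_ne_zero_of_mul (NeZero.ne (m * d))
  have horder : addOrderOf (d : ZMod (m * d)) = m := by
    rw [ZMod.addOrderOf_coe _ (NeZero.ne _), Nat.gcd_eq_right (dvd_mul_left d m),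
      Nat.mul_div_cancel _ (Nat.pos_of_ne_zero hd)]
  have hker : zmultiplesHom (ZMod (m * d)) (d : ZMod (m * d)) m = 0 := by
    rw [zmultiplesHom_apply, natCast_zsmul, ← addOrderOf_dvd_iff_nsmul_eq_zero, horder]
  refine ⟨ZMod.lift m ⟨_, hker⟩, (injective_iff_map_eq_zero _).2 fun x hx => ?_⟩
  rw [← ZMod.intCast_zmod_cast x, ZMod.lift_coe] at hx
  simp only [zmultiplesHom_apply] at hx
  rw [← addOrderOf_dvd_iff_zsmul_eq_zero, horder] at hx
  rwa [← ZMod.intCast_zmod_cast x, ZMod.intCast_zmod_eq_zero_iff_dvd]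

theorem exists_addMonoidHom_zmod_apply_ne_zero {A : Type*} [AddCommGroup A] [Finite A] {n : ℕ}
    [NeZero n] (hA : ∀ x : A, n • x = 0) {a : A} (ha : a ≠ 0) :
    ∃ χ : A →+ ZMod n, χ a ≠ 0 := by
  classical
  obtain ⟨ι, _, m, -, ⟨e⟩⟩ := AddCommGroup.equiv_directSum_zmod_of_finite' A
  obtain ⟨i, hi⟩ : ∃ i, e a i ≠ 0 := by
    by_contra! h
    exact ha (e.injective (by ext i; simp [h]))
  have hmn : m i ∣ n := by
    have := congrArg (fun x => e x i) (hA (e.symm (DirectSum.of _ i 1)))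
    rw [map_nsmul, AddEquiv.apply_symm_apply, ← map_nsmul, DirectSum.of_eq_same, map_zero,
      DirectSum.zero_apply, nsmul_one] at this
    exact (ZMod.natCast_eq_zero_iff n (m i)).1 this
  obtain ⟨g, hg⟩ := ZMod.exists_addMonoidHom_injective_of_dvd hmn
  exact ⟨g.comp ((DFinsupp.evalAddMonoidHom i).comp e.toAddMonoidHom),
    fun h => hi (hg (h.trans (map_zero g).symm))⟩

theorem Ideal.exists_ne_zero_forall_dvd_quotient_pow {R : Type*} [CommRing R]
    [IsDedekindDomain R] {P : Ideal R} (hP : Prime P) {e : ℕ} (he : e ≠ 0) :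
    ∃ t : R ⧸ P ^ e, t ≠ 0 ∧ ∀ x : R ⧸ P ^ e, x ≠ 0 → x ∣ t := by
  obtain ⟨s, hs, hs'⟩ := P.exists_mem_pow_notMem_pow_succ hP.ne_zero
    (fun h => hP.not_isUnit (Ideal.isUnit_iff.2 h)) (e - 1)
  rw [Nat.sub_add_cancel (Nat.pos_of_ne_zero he)] at hs'
  refine ⟨Ideal.Quotient.mk _ s, by rwa [Ne, Ideal.Quotient.eq_zero_iff_mem], fun x hx => ?_⟩
  obtain ⟨a, rfl⟩ := Ideal.Quotient.mk_surjective x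
  -- `span {a} ⊔ P ^ e` divides `P ^ e`, so it is some `P ^ k` with `k < e` and contains `s`.
  obtain ⟨k, hk, hJ⟩ := (dvd_prime_pow hP e).1 (Ideal.dvd_iff_le.2 (le_sup_right :
    P ^ e ≤ Ideal.span {a} ⊔ P ^ e))
  have hke : k ≠ e := by
    rintro rfl
    exact hx (Ideal.Quotient.eq_zero_iff_mem.2 (associated_iff_eq.1 hJ ▸ Ideal.mem_sup_left
      (Ideal.mem_span_singleton_self a)))
  have hsJ : s ∈ Ideal.span {a} ⊔ P ^ e := by
    rw [associated_iff_eq.1 hJ]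
    exact Ideal.pow_le_pow_right (by omega) hs
  obtain ⟨y, hy, z, hz, rfl⟩ := Submodule.mem_sup.1 hsJ
  obtain ⟨r, rfl⟩ := Ideal.mem_span_singleton'.1 hy
  refine ⟨Ideal.Quotient.mk _ r, ?_⟩
  rw [map_add, Ideal.Quotient.eq_zero_iff_mem.2 hz, add_zero, map_mul, mul_comm]

namespace AddMonoidHom

variable {A B : Type*} [CommRing A] [CommRing B] {n : ℕ}

def IsNondegenerate (ψ : A →+ ZMod n) : Prop :=
  ∀ J : Ideal A, (∀ x ∈ J, ψ x = 0) → J = ⊥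

theorem isNondegenerate_iff {ψ : A →+ ZMod n} :
    ψ.IsNondegenerate ↔ ∀ x ≠ 0, ∃ y, ψ (y * x) ≠ 0 := by
  refine ⟨fun h x hx => ?_, fun h J hJ => ?_⟩
  · by_contra! hψ
    refine hx (Ideal.span_singleton_eq_bot.1 (h _ fun z hz => ?_))
    obtain ⟨y, rfl⟩ := Ideal.mem_span_singleton'.1 hz
    exact hψ y
  · by_contra hJ0
    obtain ⟨x, hxJ, hx⟩ := Submodule.exists_mem_ne_zero_of_ne_bot hJ0
    obtain ⟨y, hy⟩ := h x hx
    exact hy (hJ _ (J.mul_mem_left y hxJ))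

theorem IsNondegenerate.comp_ringEquiv {ψ : B →+ ZMod n} (hψ : ψ.IsNondegenerate)
    (e : A ≃+* B) : (ψ.comp e.toAddMonoidHom).IsNondegenerate := by
  refine isNondegenerate_iff.2 fun x hx => ?_
  obtain ⟨y, hy⟩ := isNondegenerate_iff.1 hψ (e x) (e.map_ne_zero_iff.2 hx)
  exact ⟨e.symm y, by simpa using hy⟩

theorem isNondegenerate_sum_comp_eval {ι : Type*} [Fintype ι] {R : ι → Type*}
    [∀ i, CommRing (R i)] {ψ : ∀ i, R i →+ ZMod n} (hψ : ∀ i, (ψ i).IsNondegenerate) :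
    (∑ i, (ψ i).comp (Pi.evalAddMonoidHom R i)).IsNondegenerate := by
  classical
  refine isNondegenerate_iff.2 fun x hx => ?_
  obtain ⟨i, hi⟩ := Function.ne_iff.1 hx
  obtain ⟨y, hy⟩ := isNondegenerate_iff.1 (hψ i) (x i) hi
  refine ⟨Pi.single i y, ?_⟩
  rw [finsetSum_apply, Finset.sum_eq_single i]
  · simpa using hy
  · intro j _ hj
    simp [Pi.single_eq_of_ne hj]
  · simp

theorem isNondegenerate_of_forall_dvd {χ : A →+ ZMod n} {t : A} (ht : ∀ x ≠ 0, x ∣ t)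
    (hχ : χ t ≠ 0) : χ.IsNondegenerate :=
  isNondegenerate_iff.2 fun x hx => by
    obtain ⟨y, rfl⟩ := ht x hx
    exact ⟨y, by rwa [mul_comm]⟩

theorem exists_isNondegenerate_of_forall_dvd [Finite A] [NeZero n] (hn : (n : A) = 0) {t : A}
    (ht0 : t ≠ 0) (ht : ∀ x ≠ 0, x ∣ t) : ∃ ψ : A →+ ZMod n, ψ.IsNondegenerate := by
  obtain ⟨χ, hχ⟩ := exists_addMonoidHom_zmod_apply_ne_zero (n := n)
    (fun x => by rw [nsmul_eq_mul, hn, zero_mul]) ht0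
  exact ⟨χ, isNondegenerate_of_forall_dvd ht hχ⟩

end AddMonoidHom

/-- Let `K` be a number field with ring of integers `𝒪_K`, `I ⊆ 𝒪_K` a nonzero ideal, and
`n` the positive integer with `I ∩ ℤ = nℤ`. Then `𝒪_K/I` is a finite symmetric
`ZMod n`-algebra. -/
theorem numberField_quotient_symmetric (K : Type*) [Field K] [NumberField K]
    (I : Ideal (𝓞 K)) (hI : I ≠ ⊥) (n : ℕ) (hn : 0 < n)
    (hnI : Ideal.comap (algebraMap ℤ (𝓞 K)) I = Ideal.span {(n : ℤ)}) :
    Finite ((𝓞 K) ⧸ I) ∧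
    ∃ ψ : ((𝓞 K) ⧸ I) →+ ZMod n,
      ∀ J : Ideal ((𝓞 K) ⧸ I), (∀ x ∈ J, ψ x = 0) → J = ⊥ := by
  have : NeZero n := ⟨hn.ne'⟩
  have hnR : (n : 𝓞 K ⧸ I) = 0 := by
    have : (n : ℤ) ∈ I.comap (algebraMap ℤ (𝓞 K)) := hnI ▸ Ideal.mem_span_singleton_self _
    rw [← map_natCast (Ideal.Quotient.mk I), Ideal.Quotient.eq_zero_iff_mem]
    simpa using this
  let e := IsDedekindDomain.quotientEquivPiFactors hI
  have hne : e n = 0 := by rw [hnR, map_zero]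
  have hfactor : ∀ P : (factors I).toFinset,
      ∃ ψ : 𝓞 K ⧸ (P : Ideal (𝓞 K)) ^ (factors I).count ↑P →+ ZMod n, ψ.IsNondegenerate := by
    intro P
    have hP := prime_of_factor _ (Multiset.mem_toFinset.1 P.2)
    have : Finite (𝓞 K ⧸ (P : Ideal (𝓞 K)) ^ (factors I).count ↑P) :=
      Ideal.finiteQuotientOfFreeOfNeBot _ (pow_ne_zero _ hP.ne_zero)
    obtain ⟨t, ht0, ht⟩ := Ideal.exists_ne_zero_forall_dvd_quotient_pow hP
      (Multiset.count_pos.2 (Multiset.mem_toFinset.1 P.2)).ne'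
    exact AddMonoidHom.exists_isNondegenerate_of_forall_dvd (by simpa using congrFun hne P)
      ht0 ht
  choose ψ hψ using hfactor
  exact ⟨Ideal.finiteQuotientOfFreeOfNeBot I hI, _,
    (AddMonoidHom.isNondegenerate_sum_comp_eval hψ).comp_ringEquiv e⟩
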